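/- arXiv:1901.08464 — 2 statements merged into one kernel-verified Lean document; each statement's English description precedes it below -/
import Mathlib

section
/- An infinite family 𝒯 of complete L-theories is e-minimal if and only if it is e-categorical, i.e., 𝒯 satisfies 'for every L-sentence φ, 𝒯_φ is finite or 𝒯_{¬φ} is finite' if and only if e-Sp(𝒯) = 1 (𝒯 has exactly one accumulation point). -/
open FirstOrder Language Cardinal Set

universe u v w

variable {L : FirstOrder.Language.{u, v}}

/-- A complete theory: a satisfiable set of sentences containing each sentence or its
negation (`Theory.IsMaximal` in Mathlib). -/
abbrev CTheory (L : FirstOrder.Language.{u, v}) : Type max u v :=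
  {T : L.Theory // T.IsMaximal}

/-- The neighbourhood `𝒯_φ = {T ∈ 𝒯 | φ ∈ T}`. -/
def nbhd (𝒯 : Set (CTheory L)) (φ : L.Sentence) : Set (CTheory L) :=
  {T | T ∈ 𝒯 ∧ φ ∈ T.1}

/-- `T` is an accumulation point of `𝒯` if for every sentence `φ ∈ T` the set `𝒯_φ` is
infinite. -/
def IsAccPoint (𝒯 : Set (CTheory L)) (T : CTheory L) : Prop :=
  ∀ φ : L.Sentence, φ ∈ T.1 → (nbhd 𝒯 φ).Infinite

/-- The `E`-closure of `𝒯`: `𝒯` together with all its accumulation points. -/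
def ClE (𝒯 : Set (CTheory L)) : Set (CTheory L) :=
  𝒯 ∪ {T | IsAccPoint 𝒯 T}

/-- The `e`-spectrum of `𝒯`: the cardinality of the set of accumulation points of `𝒯`. -/
noncomputable def eSp (𝒯 : Set (CTheory L)) : Cardinal :=
  Cardinal.mk {T : CTheory L // IsAccPoint 𝒯 T}

/-- Two sentences are inconsistent if `{φ, ψ}` is unsatisfiable. -/
def Inconsistent (φ ψ : L.Sentence) : Prop :=
  ¬ FirstOrder.Language.Theory.IsSatisfiable ({φ, ψ} : L.Theory)

open Classical in
/-- `RSge α 𝒯` says `RS(𝒯) ≥ α`: `RS(𝒯) ≥ 0` iff `𝒯 ≠ ∅`; `RS(𝒯) ≥ 1` iff `𝒯` is infinite;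
for `β ≥ 1`, `RS(𝒯) ≥ β + 1` iff there are pairwise inconsistent sentences `φ_n`, `n ∈ ℕ`,
with `RS(𝒯_{φ_n}) ≥ β` for all `n`; for limit `λ`, `RS(𝒯) ≥ λ` iff `RS(𝒯) ≥ β` for all
`β < λ`. -/
noncomputable def RSge (α : Ordinal.{w}) : Set (CTheory L) → Prop :=
  @Ordinal.limitRecOn (fun _ => Set (CTheory L) → Prop) α
    (fun 𝒯 => 𝒯.Nonempty)
    (fun β ih 𝒯 =>
      if β = 0 then 𝒯.Infinite
      else ∃ φ : ℕ → L.Sentence,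
        (∀ m n : ℕ, m ≠ n → Inconsistent (φ m) (φ n)) ∧ ∀ k : ℕ, ih (nbhd 𝒯 (φ k)))
    (fun β _ ih 𝒯 => ∀ γ : Ordinal, ∀ h : γ < β, ih γ h 𝒯)

/-- `RS(𝒯) = α` for an ordinal `α`: `RS(𝒯) ≥ α` but not `RS(𝒯) ≥ α + 1`. -/
def RSeq (𝒯 : Set (CTheory L)) (α : Ordinal.{w}) : Prop :=
  RSge α 𝒯 ∧ ¬ RSge (α + 1) 𝒯

/-- `RS(𝒯) = ∞`: `RS(𝒯) ≥ α` for every ordinal `α`. -/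
def RSinf (𝒯 : Set (CTheory L)) : Prop :=
  ∀ α : Ordinal.{w}, RSge α 𝒯

/-- `ds(𝒯) = n` (relative to `RS(𝒯) = α`): `n` is the largest natural number for which
there exist `n` pairwise inconsistent sentences `φ_1, …, φ_n` with `RS(𝒯_{φ_i}) = α`. -/
def dsEq (𝒯 : Set (CTheory L)) (α : Ordinal.{w}) (n : ℕ) : Prop :=
  IsGreatest {m : ℕ | ∃ φ : Fin m → L.Sentence,
    (∀ i j : Fin m, i ≠ j → Inconsistent (φ i) (φ j)) ∧
    ∀ i : Fin m, RSeq (nbhd 𝒯 (φ i)) α} n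

/-- `𝒯` is `e`-minimal: for every sentence `φ`, `𝒯_φ` is finite or `𝒯_{¬φ}` is finite. -/
def EMinimal (𝒯 : Set (CTheory L)) : Prop :=
  ∀ φ : L.Sentence, (nbhd 𝒯 φ).Finite ∨ (nbhd 𝒯 φ.not).Finite

/-- `𝒯` is `a`-minimal: `𝒯` has infinitely many accumulation points and for every sentence
`φ`, `𝒯_φ` or `𝒯_{¬φ}` has only finitely many accumulation points. -/
def AMinimal (𝒯 : Set (CTheory L)) : Prop :=
  {T : CTheory L | IsAccPoint 𝒯 T}.Infinite ∧
  ∀ φ : L.Sentence,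
    {T : CTheory L | IsAccPoint (nbhd 𝒯 φ) T}.Finite ∨
    {T : CTheory L | IsAccPoint (nbhd 𝒯 φ.not) T}.Finite

/-- `𝒯` is `α`-minimal: `RS(𝒯) = α` and for every sentence `φ`, `RS(𝒯_φ) < α` or
`RS(𝒯_{¬φ}) < α`. -/
def AlphaMinimal (𝒯 : Set (CTheory L)) (α : Ordinal.{w}) : Prop :=
  RSeq 𝒯 α ∧
  ∀ φ : L.Sentence, ¬ RSge α (nbhd 𝒯 φ) ∨ ¬ RSge α (nbhd 𝒯 φ.not)

/-!
The limit of an infinite family `𝒮` along a non-principal ultrafilter containing `𝒮` is an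
accumulation point of `𝒮` containing every sentence common to all of `𝒮`. So if `𝒯_φ` and
`𝒯_{¬φ}` are both infinite they produce two accumulation points of `𝒯`, one containing `φ`
and one `¬φ`. Conversely two distinct complete theories are separated by some `φ ∈ T₁`,
`¬φ ∈ T₂`, and if both are accumulation points then `𝒯_φ` and `𝒯_{¬φ}` are infinite. Hence
`e`-minimality means at most one accumulation point, and an infinite `𝒯` has at least one.
-/

open Filter

namespace CTheory

lemma eq_of_subset {T₁ T₂ : CTheory L} (h : T₁.1 ⊆ T₂.1) : T₁ = T₂ := by
  refine Subtype.ext (h.antisymm fun φ hφ => ?_)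
  refine (T₁.2.mem_or_not_mem φ).resolve_right fun hφ' => ?_
  exact Theory.CompleteType.false_of_mem_of_not_mem T₂.2.1 hφ (h hφ')

lemma exists_mem_not_mem_of_ne {T₁ T₂ : CTheory L} (h : T₁ ≠ T₂) :
    ∃ φ : L.Sentence, φ ∈ T₁.1 ∧ φ.not ∈ T₂.1 := by
  by_contra! hcon
  exact h (eq_of_subset fun φ hφ => (T₂.2.mem_or_not_mem φ).resolve_right (hcon φ hφ))

def ultralim (u : Ultrafilter (CTheory L)) : CTheory L where
  val := {φ | {T : CTheory L | φ ∈ T.1} ∈ u}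
  property := by
    refine ⟨Theory.isSatisfiable_iff_isFinitelySatisfiable.2 fun T₀ hT₀ => ?_, fun φ => ?_⟩
    · have hall : ∀ᶠ T in (u : Filter (CTheory L)), ∀ φ ∈ T₀, φ ∈ T.1 :=
        (eventually_all_finset T₀).2 fun φ hφ => hT₀ hφ
      obtain ⟨T, hT⟩ := hall.exists
      exact T.2.1.mono hT
    · refine Ultrafilter.union_mem_iff.1 (univ_mem' fun T => ?_)
      exact T.2.mem_or_not_mem φ

lemma mem_ultralim {u : Ultrafilter (CTheory L)} {φ : L.Sentence} :
    φ ∈ (ultralim u).1 ↔ {T : CTheory L | φ ∈ T.1} ∈ u :=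
  Iff.rfl

lemma isAccPoint_ultralim {𝒮 : Set (CTheory L)} {u : Ultrafilter (CTheory L)} (h𝒮 : 𝒮 ∈ u)
    (hu : (u : Filter (CTheory L)) ≤ cofinite) : IsAccPoint 𝒮 (ultralim u) := fun _ hφ hfin =>
  Ultrafilter.compl_notMem_iff.2 (inter_mem h𝒮 (mem_ultralim.1 hφ))
    (hu hfin.compl_mem_cofinite)

end CTheory

lemma IsAccPoint.mono {𝒮 𝒯 : Set (CTheory L)} {T : CTheory L} (h : 𝒮 ⊆ 𝒯)
    (hT : IsAccPoint 𝒮 T) : IsAccPoint 𝒯 T := fun φ hφ =>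
  (hT φ hφ).mono fun _ hS => ⟨h hS.1, hS.2⟩

lemma exists_isAccPoint_of_infinite {𝒮 : Set (CTheory L)} (h : 𝒮.Infinite) :
    ∃ T : CTheory L, IsAccPoint 𝒮 T ∧ ∀ φ : L.Sentence, (∀ S ∈ 𝒮, φ ∈ S.1) → φ ∈ T.1 := by
  have := h.cofinite_inf_principal_neBot
  set u := Ultrafilter.of (cofinite ⊓ 𝓟 𝒮)
  have h𝒮 : 𝒮 ∈ u := le_principal_iff.1 ((Ultrafilter.of_le _).trans inf_le_right)
  refine ⟨CTheory.ultralim u, CTheory.isAccPoint_ultralim h𝒮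
    ((Ultrafilter.of_le _).trans inf_le_left), fun φ hφ => ?_⟩
  exact mem_of_superset h𝒮 hφ

lemma eMinimal_iff_subsingleton_accPoints (𝒯 : Set (CTheory L)) :
    EMinimal 𝒯 ↔ {T : CTheory L | IsAccPoint 𝒯 T}.Subsingleton := by
  constructor
  · intro hmin T₁ hT₁ T₂ hT₂
    by_contra hne
    obtain ⟨φ, hφ₁, hφ₂⟩ := CTheory.exists_mem_not_mem_of_ne hne
    exact (hmin φ).elim (hT₁ φ hφ₁) (hT₂ _ hφ₂)
  · intro hsub φ
    by_contra! hinf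
    obtain ⟨T₁, hT₁, hφ₁⟩ := exists_isAccPoint_of_infinite hinf.1
    obtain ⟨T₂, hT₂, hφ₂⟩ := exists_isAccPoint_of_infinite hinf.2
    have heq : T₁ = T₂ := hsub (hT₁.mono fun _ hS => hS.1) (hT₂.mono fun _ hS => hS.1)
    exact Theory.CompleteType.false_of_mem_of_not_mem T₂.2.1
      (heq ▸ hφ₁ φ fun _ hS => hS.2) (hφ₂ _ fun _ hS => hS.2)

/-- Theorem 1.4: an infinite family of complete theories is `e`-minimal if
and only if it is `e`-categorical, i.e. `e`-Sp(𝒯) = 1. -/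
theorem eMinimal_iff_eCategorical (𝒯 : Set (CTheory L)) (hinf : 𝒯.Infinite) :
    EMinimal 𝒯 ↔ eSp 𝒯 = 1 := by
  obtain ⟨T, hT, -⟩ := exists_isAccPoint_of_infinite hinf
  rw [eMinimal_iff_subsingleton_accPoints, eSp, Cardinal.eq_one_iff_unique,
    ← Set.subsingleton_coe]
  exact ⟨fun h => ⟨h, ⟨⟨T, hT⟩⟩⟩, And.left⟩
end

section
/- An infinite family 𝒯 of complete L-theories is e-minimal if and only if RS(𝒯) = 1 and ds(𝒯) = 1. -/
open FirstOrder Language Cardinal Set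

universe u v w

variable {L : FirstOrder.Language.{u, v}}

/-! Every sentence inconsistent with `φ` has its neighbourhood inside `𝒯_{¬φ}`, so `e`-minimality
says exactly that no two inconsistent sentences both have infinite neighbourhoods. Since
`RS(𝒮) ≥ 1` means that `𝒮` is infinite, this forbids `RS(𝒯) ≥ 2`. Once `RS(𝒯) = 1`, monotonicity
of the rank makes `RS(𝒯_φ) = 1` equivalent to `𝒯_φ` being infinite, so the same condition says
that the degree, which is at least `1` because `𝒯_⊤ = 𝒯`, is exactly `1`. -/

lemma nbhd_mono {𝒯 𝒮 : Set (CTheory L)} (h : 𝒯 ⊆ 𝒮) (φ : L.Sentence) :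
    nbhd 𝒯 φ ⊆ nbhd 𝒮 φ :=
  fun _ hT => ⟨h hT.1, hT.2⟩

lemma nbhd_subset (𝒯 : Set (CTheory L)) (φ : L.Sentence) : nbhd 𝒯 φ ⊆ 𝒯 :=
  fun _ hT => hT.1

lemma nbhd_top (𝒯 : Set (CTheory L)) : nbhd 𝒯 (⊤ : L.Sentence) = 𝒯 :=
  Set.sep_eq_self_iff_mem_true.mpr fun T _ => T.2.mem_of_models fun _ _ _ h => h

lemma Inconsistent.symm {φ ψ : L.Sentence} (h : Inconsistent φ ψ) : Inconsistent ψ φ := by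
  rwa [Inconsistent, Set.pair_comm]

lemma inconsistent_not (φ : L.Sentence) : Inconsistent φ φ.not := by
  rintro ⟨M⟩
  exact (Sentence.realize_not M).mp (M.is_model.realize_of_mem φ.not (by simp))
    (M.is_model.realize_of_mem φ (by simp))

lemma Inconsistent.nbhd_subset_nbhd_not {φ ψ : L.Sentence} (h : Inconsistent φ ψ)
    (𝒯 : Set (CTheory L)) : nbhd 𝒯 ψ ⊆ nbhd 𝒯 φ.not := by
  rintro T ⟨hT, hψ⟩
  refine ⟨hT, (T.2.mem_or_not_mem φ).resolve_left fun hφ => h (T.2.1.mono ?_)⟩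
  simp [Set.insert_subset_iff, hφ, hψ]

lemma eMinimal_iff_forall_inconsistent {𝒯 : Set (CTheory L)} :
    EMinimal 𝒯 ↔ ∀ φ ψ : L.Sentence, Inconsistent φ ψ →
      (nbhd 𝒯 φ).Finite ∨ (nbhd 𝒯 ψ).Finite :=
  ⟨fun hE φ _ h => (hE φ).imp_right fun hfin => hfin.subset (h.nbhd_subset_nbhd_not 𝒯),
    fun h φ => h φ φ.not (inconsistent_not φ)⟩

lemma RSge_zero (𝒯 : Set (CTheory L)) : RSge (0 : Ordinal.{w}) 𝒯 ↔ 𝒯.Nonempty := by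
  rw [RSge, Ordinal.limitRecOn_zero]

open Classical in
lemma RSge_add_one (β : Ordinal.{w}) (𝒯 : Set (CTheory L)) :
    RSge (β + 1) 𝒯 ↔ if β = 0 then 𝒯.Infinite
      else ∃ φ : ℕ → L.Sentence,
        (∀ m n : ℕ, m ≠ n → Inconsistent (φ m) (φ n)) ∧ ∀ k : ℕ, RSge β (nbhd 𝒯 (φ k)) := by
  rw [RSge, Ordinal.limitRecOn_add_one]
  rfl

lemma RSge_of_isSuccLimit {β : Ordinal.{w}} (hβ : Order.IsSuccLimit β) (𝒯 : Set (CTheory L)) :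
    RSge β 𝒯 ↔ ∀ γ < β, RSge γ 𝒯 := by
  rw [RSge, Ordinal.limitRecOn_limit _ _ _ _ hβ]
  rfl

lemma RSge_one (𝒯 : Set (CTheory L)) : RSge (1 : Ordinal.{w}) 𝒯 ↔ 𝒯.Infinite := by
  simpa using RSge_add_one (0 : Ordinal.{w}) 𝒯

lemma RSge_two (𝒯 : Set (CTheory L)) : RSge ((1 : Ordinal.{w}) + 1) 𝒯 ↔
    ∃ φ : ℕ → L.Sentence,
      (∀ m n : ℕ, m ≠ n → Inconsistent (φ m) (φ n)) ∧ ∀ k : ℕ, (nbhd 𝒯 (φ k)).Infinite := by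
  simp only [RSge_add_one, one_ne_zero, if_false, RSge_one]

lemma RSge_mono {𝒯 𝒮 : Set (CTheory L)} (h : 𝒯 ⊆ 𝒮) {α : Ordinal.{w}} (hα : RSge α 𝒯) :
    RSge α 𝒮 := by
  induction α using Ordinal.limitRecOn generalizing 𝒯 𝒮 with
  | zero => exact (RSge_zero 𝒮).mpr (((RSge_zero 𝒯).mp hα).mono h)
  | add_one β ih =>
    rw [RSge_add_one] at hα ⊢
    split_ifs at hα ⊢
    · exact hα.mono h
    · obtain ⟨φ, hφ, hk⟩ := hα
      exact ⟨φ, hφ, fun k => ih (nbhd_mono h (φ k)) (hk k)⟩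
  | limit β hβ ih =>
    rw [RSge_of_isSuccLimit hβ] at hα ⊢
    exact fun γ hγ => ih γ hγ h (hα γ hγ)

lemma RSeq_one_iff_of_not_RSge_two {𝒯 𝒮 : Set (CTheory L)} (h : 𝒮 ⊆ 𝒯)
    (h𝒯 : ¬ RSge ((1 : Ordinal.{w}) + 1) 𝒯) : RSeq 𝒮 (1 : Ordinal.{w}) ↔ 𝒮.Infinite :=
  ⟨fun h𝒮 => (RSge_one 𝒮).mp h𝒮.1,
    fun h𝒮 => ⟨(RSge_one 𝒮).mpr h𝒮, fun h2 => h𝒯 (RSge_mono h h2)⟩⟩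

universe x

-- The main theorem instantiates `RSeq` and `dsEq` at independent universes of ordinals.
lemma RSeq_one_iff_universe (𝒯 : Set (CTheory L)) :
    RSeq 𝒯 (1 : Ordinal.{w}) ↔ RSeq 𝒯 (1 : Ordinal.{x}) := by
  simp only [RSeq, RSge_one, RSge_two]

lemma dsEq_one_iff {𝒯 : Set (CTheory L)} {α : Ordinal.{w}} (h : RSeq 𝒯 α) :
    dsEq 𝒯 α 1 ↔ ∀ φ ψ : L.Sentence, Inconsistent φ ψ →
      RSeq (nbhd 𝒯 φ) α → ¬ RSeq (nbhd 𝒯 ψ) α := by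
  constructor
  · intro hds φ ψ hφψ hφ hψ
    have two_mem : 2 ∈ {m : ℕ | ∃ φ : Fin m → L.Sentence,
        (∀ i j : Fin m, i ≠ j → Inconsistent (φ i) (φ j)) ∧
        ∀ i : Fin m, RSeq (nbhd 𝒯 (φ i)) α} :=
      ⟨![φ, ψ], by simp [Fin.forall_fin_two, hφψ, hφψ.symm], by simp [Fin.forall_fin_two, hφ, hψ]⟩
    exact absurd (hds.2 two_mem) (by norm_num)
  · intro hpair
    refine ⟨⟨fun _ => ⊤, fun i j hij => absurd (Subsingleton.elim i j) hij,
      fun _ => by rwa [nbhd_top]⟩, ?_⟩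
    rintro m ⟨φ, hφ, hRS⟩
    by_contra! hm
    exact hpair _ _ (hφ ⟨0, by omega⟩ ⟨1, by omega⟩ (by simp [Fin.ext_iff]))
      (hRS _) (hRS _)

lemma dsEq_one_one_iff_eMinimal {𝒯 : Set (CTheory L)} (h : RSeq 𝒯 (1 : Ordinal.{w})) :
    dsEq 𝒯 (1 : Ordinal.{w}) 1 ↔ EMinimal 𝒯 := by
  simp only [dsEq_one_iff h, eMinimal_iff_forall_inconsistent,
    RSeq_one_iff_of_not_RSge_two (nbhd_subset 𝒯 _) h.2, ← Set.not_infinite]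
  exact forall₂_congr fun _ _ => imp_congr_right fun _ => imp_iff_not_or

lemma EMinimal.not_RSge_two {𝒯 : Set (CTheory L)} (hE : EMinimal 𝒯) :
    ¬ RSge ((1 : Ordinal.{w}) + 1) 𝒯 := by
  rw [RSge_two]
  rintro ⟨φ, hφ, hinf⟩
  exact (eMinimal_iff_forall_inconsistent.mp hE _ _ (hφ 0 1 zero_ne_one)).elim (hinf 0) (hinf 1)

/-- Proposition 2.3: an infinite family `𝒯` is `e`-minimal if and only if
`RS(𝒯) = 1` and `ds(𝒯) = 1`. -/
theorem eMinimal_iff_rank_one_degree_one (𝒯 : Set (CTheory L)) (hinf : 𝒯.Infinite) :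
    EMinimal 𝒯 ↔ (RSeq 𝒯 1 ∧ dsEq 𝒯 1 1) := by
  constructor
  · intro hE
    have hRS : RSeq 𝒯 1 := ⟨(RSge_one 𝒯).mpr hinf, hE.not_RSge_two⟩
    exact ⟨hRS, (dsEq_one_one_iff_eMinimal ((RSeq_one_iff_universe 𝒯).mp hRS)).mpr hE⟩
  · rintro ⟨hRS, hds⟩
    exact (dsEq_one_one_iff_eMinimal ((RSeq_one_iff_universe 𝒯).mp hRS)).mp hds
end
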